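/- Let d ≥ 3, let [[A, wᵗ],[v, c]] ∈ SO(d,ℝ) with c ≠ 0, z' := c^{-1}v, and let k̃ ∈ SO(d-1,ℝ). Then k̃·(A − wᵗz')·(A − wᵗz')ᵗ·k̃ᵗ = I_{d-1} + (k̃ wᵗ w k̃ᵗ)/c², and (A − wᵗz')ᵗ·(A − wᵗz') = I_{d-1} + (vᵗ v)/c². Moreover det(I_{d-1} + (k̃ wᵗ w k̃ᵗ)/c²) = c^{-2} = det(I_{d-1} + (vᵗ v)/c²). -/

import Mathlib

/-!
`A - wᵗz'` is the Schur complement `S = A - B D⁻¹ C` of the corner `D = c` in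
`k = [[A, B], [C, D]]`. For orthogonal `k` the block identities give `S Aᵀ = 1` and
`S Cᵀ = -B D⁻¹` (indeed `S = (Aᵀ)⁻¹`), hence `S Sᵀ = 1 + (B D⁻¹)(B D⁻¹)ᵀ`; the same applied to
`kᵀ` gives `Sᵀ S`. Since `det k = det D · det S` and `(det k)² = det (k kᵀ) = 1`, both products
have determinant `(det D)⁻²`, and conjugating by the orthogonal `k̃` changes neither the shape of
the formula nor the determinant.
-/

open Matrix

def colv {n : ℕ} (b : Fin n → ℝ) : Matrix (Fin n) Unit ℝ := Matrix.of fun i _ => b i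

def rowv {n : ℕ} (v : Fin n → ℝ) : Matrix Unit (Fin n) ℝ := Matrix.of fun _ j => v j

def scal (c : ℝ) : Matrix Unit Unit ℝ := Matrix.of fun _ _ => c

namespace Matrix

variable {m n R : Type*} [Fintype m] [Fintype n] [DecidableEq m] [DecidableEq n] [CommRing R]

theorem mul_one_add_mul_transpose {U : Matrix m m R} (hU : U * Uᵀ = 1) (X : Matrix m m R) :
    U * (1 + X) * Uᵀ = 1 + U * X * Uᵀ := by
  rw [Matrix.mul_add, Matrix.add_mul, Matrix.mul_one, hU]

theorem det_mul_mul_transpose {U : Matrix m m R} (hU : U * Uᵀ = 1) (X : Matrix m m R) :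
    (U * X * Uᵀ).det = X.det := by
  have hUU : U.det * U.det = 1 := by
    simpa only [det_mul, det_transpose, det_one] using congrArg det hU
  rw [det_mul, det_mul, det_transpose, mul_right_comm, hUU, one_mul]

noncomputable def schurComplement (A : Matrix m m R) (B : Matrix m n R) (C : Matrix n m R)
    (D : Matrix n n R) : Matrix m m R :=
  A - B * D⁻¹ * C

variable {A : Matrix m m R} {B : Matrix m n R} {C : Matrix n m R} {D : Matrix n n R}

theorem blocks_of_fromBlocks_mul_transpose_eq_one
    (hk : fromBlocks A B C D * (fromBlocks A B C D)ᵀ = 1) :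
    A * Aᵀ + B * Bᵀ = 1 ∧ A * Cᵀ + B * Dᵀ = 0 ∧ C * Aᵀ + D * Bᵀ = 0 ∧ C * Cᵀ + D * Dᵀ = 1 := by
  rwa [fromBlocks_transpose, fromBlocks_multiply, ← fromBlocks_one, fromBlocks_inj] at hk

omit [Fintype m] [DecidableEq m] in
theorem schurComplement_transpose :
    schurComplement Aᵀ Cᵀ Bᵀ Dᵀ = (schurComplement A B C D)ᵀ := by
  simp only [schurComplement, transpose_sub, transpose_mul, transpose_nonsing_inv,
    Matrix.mul_assoc]

theorem schurComplement_mul_transpose_self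
    (hk : fromBlocks A B C D * (fromBlocks A B C D)ᵀ = 1) (hD : IsUnit D.det) :
    schurComplement A B C D * (schurComplement A B C D)ᵀ = 1 + B * D⁻¹ * (B * D⁻¹)ᵀ := by
  obtain ⟨hAA, hAC, hCA, hCC⟩ := blocks_of_fromBlocks_mul_transpose_eq_one hk
  have hSA : schurComplement A B C D * Aᵀ = 1 := by
    rw [schurComplement, Matrix.sub_mul, Matrix.mul_assoc, eq_neg_of_add_eq_zero_left hCA,
      eq_sub_of_add_eq hAA, Matrix.mul_neg, ← Matrix.mul_assoc,
      nonsing_inv_mul_cancel_right _ _ hD]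
    abel
  have hSC : schurComplement A B C D * Cᵀ = -(B * D⁻¹) := by
    rw [schurComplement, Matrix.sub_mul, Matrix.mul_assoc, eq_sub_of_add_eq hCC,
      eq_neg_of_add_eq_zero_left hAC, Matrix.mul_sub, Matrix.mul_one, ← Matrix.mul_assoc,
      nonsing_inv_mul_cancel_right _ _ hD]
    abel
  have hSt : (schurComplement A B C D)ᵀ = Aᵀ - Cᵀ * (B * D⁻¹)ᵀ := by
    simp only [schurComplement, transpose_sub, transpose_mul, Matrix.mul_assoc]
  rw [hSt, Matrix.mul_sub, hSA, ← Matrix.mul_assoc, hSC, Matrix.neg_mul, sub_neg_eq_add]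

theorem transpose_schurComplement_mul_self
    (hk : (fromBlocks A B C D)ᵀ * fromBlocks A B C D = 1) (hD : IsUnit D.det) :
    (schurComplement A B C D)ᵀ * schurComplement A B C D = 1 + (D⁻¹ * C)ᵀ * (D⁻¹ * C) := by
  have hkt : fromBlocks Aᵀ Cᵀ Bᵀ Dᵀ * (fromBlocks Aᵀ Cᵀ Bᵀ Dᵀ)ᵀ = 1 := by
    rwa [← fromBlocks_transpose, transpose_transpose]
  have := schurComplement_mul_transpose_self hkt (isUnit_det_transpose D hD)
  rwa [schurComplement_transpose, transpose_transpose, ← transpose_nonsing_inv,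
    ← transpose_mul, transpose_transpose] at this

theorem det_sq_mul_det_schurComplement_sq
    (hk : fromBlocks A B C D * (fromBlocks A B C D)ᵀ = 1) (hD : IsUnit D.det) :
    D.det ^ 2 * (schurComplement A B C D).det ^ 2 = 1 := by
  let := invertibleOfIsUnitDet D hD
  have hdet := det_fromBlocks₂₂ A B C D
  rw [invOf_eq_nonsing_inv, ← schurComplement] at hdet
  rw [← mul_pow, ← hdet, sq]
  simpa only [det_mul, det_transpose, det_one] using congrArg det hk

end Matrix

section RowColumn

variable {n : ℕ}

theorem det_scal (c : ℝ) : (scal c).det = c := det_unique _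

theorem scal_mul_scal (a b : ℝ) : scal a * scal b = scal (a * b) := by
  ext; simp [mul_apply, scal]

theorem inv_scal {c : ℝ} (hc : c ≠ 0) : (scal c)⁻¹ = scal c⁻¹ := by
  refine inv_eq_left_inv ?_
  rw [scal_mul_scal, inv_mul_cancel₀ hc]
  ext; simp [scal, one_apply]

theorem colv_mul_scal (w : Fin n → ℝ) (a : ℝ) : colv w * scal a = a • colv w := by
  ext; simp [mul_apply, colv, scal, mul_comm]

theorem scal_mul_rowv (v : Fin n → ℝ) (a : ℝ) : scal a * rowv v = a • rowv v := by
  ext; simp [mul_apply, rowv, scal]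

theorem colv_mul_inv_scal_mul_transpose (w : Fin n → ℝ) {c : ℝ} (hc : c ≠ 0) :
    colv w * (scal c)⁻¹ * (colv w * (scal c)⁻¹)ᵀ = (c ^ 2)⁻¹ • (colv w * rowv w) := by
  rw [inv_scal hc, colv_mul_scal, transpose_smul, Matrix.smul_mul, Matrix.mul_smul, smul_smul,
    ← mul_inv, ← sq]
  rfl

theorem transpose_inv_scal_mul_rowv_mul (v : Fin n → ℝ) {c : ℝ} (hc : c ≠ 0) :
    ((scal c)⁻¹ * rowv v)ᵀ * ((scal c)⁻¹ * rowv v) = (c ^ 2)⁻¹ • (colv v * rowv v) := by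
  rw [inv_scal hc, scal_mul_rowv, transpose_smul, Matrix.smul_mul, Matrix.mul_smul, smul_smul,
    ← mul_inv, ← sq]
  rfl

end RowColumn

theorem almost_rotation_symmetric_factor_general (d : ℕ)
    (k : Matrix (Fin (d-1) ⊕ Unit) (Fin (d-1) ⊕ Unit) ℝ)
    (A : Matrix (Fin (d-1)) (Fin (d-1)) ℝ) (w v : Fin (d-1) → ℝ) (c : ℝ)
    (hblock : k = Matrix.fromBlocks A (colv w) (rowv v) (scal c))
    (horth : k * kᵀ = 1) (horth' : kᵀ * k = 1) (hc : c ≠ 0)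
    (ktil : Matrix (Fin (d-1)) (Fin (d-1)) ℝ)
    (hktil : ktil * ktilᵀ = 1) :
    (ktil * (A - colv w * rowv (fun j => c⁻¹ * v j)) *
        (A - colv w * rowv (fun j => c⁻¹ * v j))ᵀ * ktilᵀ =
      1 + (c ^ 2)⁻¹ • (ktil * (colv w * rowv w) * ktilᵀ)) ∧
    ((A - colv w * rowv (fun j => c⁻¹ * v j))ᵀ * (A - colv w * rowv (fun j => c⁻¹ * v j)) =
      1 + (c ^ 2)⁻¹ • (colv v * rowv v)) ∧
    ((1 + (c ^ 2)⁻¹ • (ktil * (colv w * rowv w) * ktilᵀ) :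
        Matrix (Fin (d-1)) (Fin (d-1)) ℝ).det = (c ^ 2)⁻¹) ∧
    ((1 + (c ^ 2)⁻¹ • (colv v * rowv v) : Matrix (Fin (d-1)) (Fin (d-1)) ℝ).det = (c ^ 2)⁻¹) := by
  subst hblock
  have hD : IsUnit (scal c).det := by rwa [det_scal, isUnit_iff_ne_zero]
  set S := schurComplement A (colv w) (rowv v) (scal c) with hSdef
  have hS : A - colv w * rowv (fun j => c⁻¹ * v j) = S := by
    rw [hSdef, schurComplement, inv_scal hc, Matrix.mul_assoc, scal_mul_rowv]; rfl
  have hSS : S * Sᵀ = 1 + (c ^ 2)⁻¹ • (colv w * rowv w) := by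
    rw [← colv_mul_inv_scal_mul_transpose w hc]
    exact schurComplement_mul_transpose_self horth hD
  have hSS' : Sᵀ * S = 1 + (c ^ 2)⁻¹ • (colv v * rowv v) := by
    rw [← transpose_inv_scal_mul_rowv_mul v hc]
    exact transpose_schurComplement_mul_self horth' hD
  have hdetS : S.det ^ 2 = (c ^ 2)⁻¹ := eq_inv_of_mul_eq_one_right <| by
    simpa only [det_scal] using det_sq_mul_det_schurComplement_sq horth hD
  have hconj : ktil * (S * Sᵀ) * ktilᵀ = 1 + (c ^ 2)⁻¹ • (ktil * (colv w * rowv w) * ktilᵀ) := by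
    rw [hSS, mul_one_add_mul_transpose hktil, Matrix.mul_smul, Matrix.smul_mul]
  rw [hS]
  refine ⟨by rwa [Matrix.mul_assoc ktil], hSS', ?_, ?_⟩
  · rw [← hconj, det_mul_mul_transpose hktil, det_mul, det_transpose, ← sq, hdetS]
  · rw [← hSS', det_mul, det_transpose, mul_comm, ← sq, hdetS]

/-- Lemma on the symmetric factor: for `[[A, wᵗ],[v, c]] ∈ SO(d,ℝ)`, `c ≠ 0`, `z' = c⁻¹v`
and `k̃ ∈ SO(d-1,ℝ)`:
`k̃(A − wᵗz')(A − wᵗz')ᵗk̃ᵗ = I + k̃wᵗwk̃ᵗ/c²`, `(A − wᵗz')ᵗ(A − wᵗz') = I + vᵗv/c²`,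
and both matrices have determinant `c⁻²`. -/
theorem almost_rotation_symmetric_factor (d : ℕ) (hd : 3 ≤ d)
    (k : Matrix (Fin (d-1) ⊕ Unit) (Fin (d-1) ⊕ Unit) ℝ)
    (A : Matrix (Fin (d-1)) (Fin (d-1)) ℝ) (w v : Fin (d-1) → ℝ) (c : ℝ)
    (hblock : k = Matrix.fromBlocks A (colv w) (rowv v) (scal c))
    (horth : k * kᵀ = 1) (horth' : kᵀ * k = 1) (hdet : k.det = 1) (hc : c ≠ 0)
    (ktil : Matrix (Fin (d-1)) (Fin (d-1)) ℝ)
    (hktil : ktil * ktilᵀ = 1) (hktil' : ktilᵀ * ktil = 1) (hktildet : ktil.det = 1) :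
    (ktil * (A - colv w * rowv (fun j => c⁻¹ * v j)) *
        (A - colv w * rowv (fun j => c⁻¹ * v j))ᵀ * ktilᵀ =
      1 + (c ^ 2)⁻¹ • (ktil * (colv w * rowv w) * ktilᵀ)) ∧
    ((A - colv w * rowv (fun j => c⁻¹ * v j))ᵀ * (A - colv w * rowv (fun j => c⁻¹ * v j)) =
      1 + (c ^ 2)⁻¹ • (colv v * rowv v)) ∧
    ((1 + (c ^ 2)⁻¹ • (ktil * (colv w * rowv w) * ktilᵀ) :
        Matrix (Fin (d-1)) (Fin (d-1)) ℝ).det = (c ^ 2)⁻¹) ∧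
    ((1 + (c ^ 2)⁻¹ • (colv v * rowv v) : Matrix (Fin (d-1)) (Fin (d-1)) ℝ).det = (c ^ 2)⁻¹) :=
  almost_rotation_symmetric_factor_general d k A w v c hblock horth horth' hc ktil hktil
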